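/- arXiv:2602.06666 — 5 statements merged into one kernel-verified Lean document; each statement's English description precedes it below -/
import Mathlib

section
/- Let H be a complex Hilbert space, P a bounded linear operator on H, and ε a real number with 0 < ε < 1/4 such that ‖P² − P‖ < ε. Then for every ξ ∈ ℂ with |ξ − 1| = 2ε, the operator ξ·I − P is invertible and ‖(ξ·I − P)⁻¹‖ < (‖P‖ + 2ε) / (ε(1 − 4ε)). -/
open Complex

/-!
Put `η = 1 - ξ` and `w = ξ η`. The identity `(ξ - P)(η - P) = w - (P - P²)` of commuting
operators reduces invertibility of `ξ - P` to that of `w - (P - P²)`, which a Neumann series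
provides as soon as `‖P² - P‖ < |w|`, with `‖(w - (P - P²))⁻¹‖ ≤ (|w| - ‖P² - P‖)⁻¹`.
For `|ξ - 1| = 2ε` one has `|w| ≥ 2ε(1 - 2ε)`, so `|w| - ‖P² - P‖ > ε(1 - 4ε)`, while
`‖η - P‖ ≤ ‖P‖ + 2ε`.
-/

theorem Ring.inverse_eq_mul_inverse_mul {M₀ : Type*} [MonoidWithZero M₀] {a b : M₀}
    (h : Commute a b) (hab : IsUnit (a * b)) : Ring.inverse a = b * Ring.inverse (a * b) := by
  obtain ⟨-, hb⟩ := h.isUnit_mul_iff.mp hab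
  rw [Ring.mul_inverse_rev' h, ← mul_assoc, Ring.mul_inverse_cancel b hb, one_mul]

theorem Ring.inverse_smul {𝕜 A : Type*} [Field 𝕜] [Ring A] [Algebra 𝕜 A] {w : 𝕜} (hw : w ≠ 0)
    {x : A} (hx : IsUnit x) : Ring.inverse (w • x) = w⁻¹ • Ring.inverse x := by
  obtain ⟨u, rfl⟩ := hx
  let v : Aˣ := ⟨w • u, w⁻¹ • ↑u⁻¹, by simp [hw], by simp [hw]⟩
  rw [show w • (u : A) = v from rfl, Ring.inverse_unit, Ring.inverse_unit]
  rfl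

section Algebra

variable {𝕜 A : Type*} [CommRing 𝕜] [Ring A] [Algebra 𝕜 A]

theorem commute_smul_one_sub_smul_one_sub (ξ η : 𝕜) (p : A) :
    Commute (ξ • 1 - p) (η • 1 - p) :=
  ((Commute.one_left _).smul_left ξ).sub_left
    (((Commute.one_right p).smul_right η).sub_right (Commute.refl p))

theorem smul_one_sub_mul_smul_one_sub (ξ : 𝕜) (p : A) :
    (ξ • 1 - p) * ((1 - ξ) • 1 - p) = (ξ * (1 - ξ)) • 1 - (p - p ^ 2) := by
  simp only [sub_mul, mul_sub, one_mul, mul_one, smul_mul_assoc, mul_smul_comm, sq]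
  module

end Algebra

section NormedAlgebra

variable {𝕜 A : Type*} [NormedField 𝕜] [NormedRing A] [NormedAlgebra 𝕜 A]

theorem norm_inv_smul_lt_one {w : 𝕜} {q : A} (hq : ‖q‖ < ‖w‖) : ‖w⁻¹ • q‖ < 1 := by
  have hw : 0 < ‖w‖ := (norm_nonneg q).trans_lt hq
  rwa [norm_smul, norm_inv, inv_mul_lt_iff₀ hw, mul_one]

theorem smul_one_sub_eq_smul_one_sub_inv_smul {w : 𝕜} (hw : w ≠ 0) (q : A) :
    w • 1 - q = w • (1 - w⁻¹ • q) := by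
  rw [smul_sub, smul_inv_smul₀ hw]

variable [CompleteSpace A]

theorem isUnit_smul_one_sub_of_norm_lt {w : 𝕜} {q : A} (hq : ‖q‖ < ‖w‖) :
    IsUnit (w • 1 - q) := by
  have hw : w ≠ 0 := norm_pos_iff.mp ((norm_nonneg q).trans_lt hq)
  rw [smul_one_sub_eq_smul_one_sub_inv_smul hw]
  exact (isUnit_smul_iff (Units.mk0 w hw) _).mpr
    (isUnit_one_sub_of_norm_lt_one (norm_inv_smul_lt_one hq))

theorem norm_inverse_smul_one_sub_le (h1 : ‖(1 : A)‖ ≤ 1) {w : 𝕜} {q : A} (hq : ‖q‖ < ‖w‖) :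
    ‖Ring.inverse (w • 1 - q)‖ ≤ (‖w‖ - ‖q‖)⁻¹ := by
  have hw : w ≠ 0 := norm_pos_iff.mp ((norm_nonneg q).trans_lt hq)
  set t := w⁻¹ • q with ht_def
  have ht : ‖t‖ < 1 := norm_inv_smul_lt_one hq
  rw [smul_one_sub_eq_smul_one_sub_inv_smul hw, ← ht_def,
    Ring.inverse_smul hw (isUnit_one_sub_of_norm_lt_one ht), norm_smul, norm_inv,
    ← geom_series_eq_inverse t ht]
  calc ‖w‖⁻¹ * ‖∑' n, t ^ n‖ ≤ ‖w‖⁻¹ * (1 - ‖t‖)⁻¹ := by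
        gcongr
        linarith [tsum_geometric_le_of_norm_lt_one t ht]
    _ = (‖w‖ - ‖q‖)⁻¹ := by
        rw [← mul_inv, mul_sub, mul_one, ht_def, norm_smul, norm_inv,
          mul_inv_cancel_left₀ (norm_ne_zero_iff.mpr hw)]

theorem isUnit_smul_one_sub_of_norm_sq_sub_lt {ξ : 𝕜} {p : A}
    (hp : ‖p ^ 2 - p‖ < ‖ξ * (1 - ξ)‖) : IsUnit (ξ • 1 - p) := by
  have hprod := isUnit_smul_one_sub_of_norm_lt (q := p - p ^ 2) (by rwa [norm_sub_rev])
  rw [← smul_one_sub_mul_smul_one_sub] at hprod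
  exact ((commute_smul_one_sub_smul_one_sub ξ (1 - ξ) p).isUnit_mul_iff.mp hprod).1

theorem norm_inverse_smul_one_sub_le_of_norm_sq_sub_lt (h1 : ‖(1 : A)‖ ≤ 1) {ξ : 𝕜} {p : A}
    (hp : ‖p ^ 2 - p‖ < ‖ξ * (1 - ξ)‖) :
    ‖Ring.inverse (ξ • 1 - p)‖ ≤ (‖1 - ξ‖ + ‖p‖) / (‖ξ * (1 - ξ)‖ - ‖p ^ 2 - p‖) := by
  have hcomm := commute_smul_one_sub_smul_one_sub ξ (1 - ξ) p
  have hprod : IsUnit ((ξ • 1 - p) * ((1 - ξ) • 1 - p)) := by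
    rw [smul_one_sub_mul_smul_one_sub]
    exact isUnit_smul_one_sub_of_norm_lt (by rwa [norm_sub_rev])
  have hcofactor : ‖(1 - ξ) • (1 : A) - p‖ ≤ ‖1 - ξ‖ + ‖p‖ := by
    grw [norm_sub_le, norm_smul, h1, mul_one]
  rw [Ring.inverse_eq_mul_inverse_mul hcomm hprod, smul_one_sub_mul_smul_one_sub, div_eq_mul_inv]
  grw [norm_mul_le, hcofactor, norm_inverse_smul_one_sub_le h1 (by rwa [norm_sub_rev]),
    norm_sub_rev p]

end NormedAlgebra

/-- Resolvent estimate: if `‖P² − P‖ < ε` with `0 < ε < 1/4`, then for every `ξ ∈ ℂ` with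
`|ξ − 1| = 2ε` the operator `ξ·I − P` is invertible and
`‖(ξ·I − P)⁻¹‖ < (‖P‖ + 2ε)/(ε(1 − 4ε))`. -/
theorem stmt4 {H : Type*} [NormedAddCommGroup H] [InnerProductSpace ℂ H] [CompleteSpace H]
    (P : H →L[ℂ] H) (ε : ℝ) (hε0 : 0 < ε) (hε : ε < 1 / 4)
    (hP : ‖P ^ 2 - P‖ < ε) :
    ∀ ξ : ℂ, ‖ξ - 1‖ = 2 * ε →
      IsUnit (ξ • (1 : H →L[ℂ] H) - P) ∧
      ‖Ring.inverse (ξ • (1 : H →L[ℂ] H) - P)‖ < (‖P‖ + 2 * ε) / (ε * (1 - 4 * ε)) := by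
  intro ξ hξ
  have hξ_norm : 1 - 2 * ε ≤ ‖ξ‖ := by
    have := norm_sub_norm_le (1 : ℂ) (1 - ξ)
    rw [norm_one, sub_sub_cancel, norm_sub_rev, hξ] at this
    linarith
  have hw : ‖ξ * (1 - ξ)‖ = ‖ξ‖ * (2 * ε) := by rw [norm_mul, norm_sub_rev, hξ]
  have hgap : ε * (1 - 4 * ε) < ‖ξ * (1 - ξ)‖ - ‖P ^ 2 - P‖ := by
    rw [hw]; nlinarith
  have hp : ‖P ^ 2 - P‖ < ‖ξ * (1 - ξ)‖ := by nlinarith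
  refine ⟨isUnit_smul_one_sub_of_norm_sq_sub_lt hp, ?_⟩
  calc ‖Ring.inverse (ξ • 1 - P)‖
      ≤ (‖1 - ξ‖ + ‖P‖) / (‖ξ * (1 - ξ)‖ - ‖P ^ 2 - P‖) :=
        norm_inverse_smul_one_sub_le_of_norm_sq_sub_lt ContinuousLinearMap.norm_id_le hp
    _ < (‖P‖ + 2 * ε) / (ε * (1 - 4 * ε)) := by
        rw [norm_sub_rev, hξ, add_comm]
        exact div_lt_div_of_pos_left (by positivity) (by nlinarith) hgap
end

section
/- Let H be a complex Hilbert space, P a bounded linear operator on H, and ε a real number with 0 < ε < 1/4 such that ‖P² − P‖ < ε. Then for every ξ on the circle {ξ ∈ ℂ : |ξ − 1| = 2ε} the operator ξ·I − P is invertible, and the operator Θ(P) := (1/(2πi)) ∮_{|ξ−1|=2ε} (ξ·I − P)⁻¹ dξ (the circle integral over the circle of center 1 and radius 2ε, traversed counterclockwise) is an idempotent: Θ(P)² = Θ(P). -/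
/-!
If `ξ` is in the spectrum of `P`, then `ξ² - ξ` is in the spectrum of `P² - P`, so
`|ξ| |ξ - 1| ≤ ‖P² - P‖ < ε`; hence the spectrum of `P` misses the annulus
`2ε ≤ |ξ - 1| ≤ 1 - 2ε`, on which the resolvent `R` is holomorphic. Let `Γ` be the integral of `R`
over the inner circle `|z - 1| = 2ε`. By Cauchy's theorem one factor of `Γ²` may be taken over the
outer circle `|w - 1| = 1 - 2ε`. The resolvent identity `R(w) R(z) = (R(z) - R(w)) / (w - z)` and
Fubini then give `Γ² = 2πi Γ`: the `R(w)` term vanishes because `w` lies outside the inner circle,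
and integrating `(w - z)⁻¹` over the outer circle gives `2πi` because `z` lies inside it.
-/

open Complex Metric Set MeasureTheory Function Polynomial

theorem ContinuousLinearMap.circleIntegral_comp_comm {E F : Type*}
    [NormedAddCommGroup E] [NormedSpace ℂ E] [CompleteSpace E]
    [NormedAddCommGroup F] [NormedSpace ℂ F] [CompleteSpace F] (L : E →L[ℂ] F) {f : ℂ → E}
    {c : ℂ} {R : ℝ} (hf : CircleIntegrable f c R) :
    ∮ z in C(c, R), L (f z) = L (∮ z in C(c, R), f z) := by
  simp only [circleIntegral, ← L.map_smul, L.intervalIntegral_comp_comm hf.out]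

theorem circleIntegral_circleIntegral_swap {E : Type*} [NormedAddCommGroup E] [NormedSpace ℂ E]
    {F : ℂ → ℂ → E} {c₁ c₂ : ℂ} {R₁ R₂ : ℝ} (hR₁ : 0 ≤ R₁) (hR₂ : 0 ≤ R₂)
    (hF : ContinuousOn (uncurry F) (sphere c₁ R₁ ×ˢ sphere c₂ R₂)) :
    ∮ w in C(c₂, R₂), ∮ z in C(c₁, R₁), F z w = ∮ z in C(c₁, R₁), ∮ w in C(c₂, R₂), F z w := by
  simp only [circleIntegral, ← intervalIntegral.integral_smul]
  rw [intervalIntegral_intervalIntegral_swap]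
  · simp only [smul_comm (deriv (circleMap c₁ R₁) _)]
  · have hFθ : Continuous fun p : ℝ × ℝ => F (circleMap c₁ R₁ p.2) (circleMap c₂ R₂ p.1) :=
      hF.comp_continuous (f := fun p : ℝ × ℝ => (circleMap c₁ R₁ p.2, circleMap c₂ R₂ p.1))
        (by fun_prop) fun p => ⟨circleMap_mem_sphere c₁ hR₁ p.2, circleMap_mem_sphere c₂ hR₂ p.1⟩
    have hG : Continuous (uncurry fun s t : ℝ =>
        deriv (circleMap c₂ R₂) s • deriv (circleMap c₁ R₁) t •
          F (circleMap c₁ R₁ t) (circleMap c₂ R₂ s)) := by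
      simp only [deriv_circleMap]
      exact ((continuous_circleMap 0 R₂).comp continuous_fst |>.mul continuous_const).smul
        (((continuous_circleMap 0 R₁).comp continuous_snd |>.mul continuous_const).smul hFθ)
    exact (hG.continuousOn.integrableOn_compact (isCompact_uIcc.prod isCompact_uIcc)).mono_set
      (prod_mono uIoc_subset_uIcc uIoc_subset_uIcc)

section ResolventIdentity

variable {𝕜 A : Type*} [Field 𝕜] [Ring A] [Algebra 𝕜 A]

theorem resolvent_sub_resolvent_eq_sub_smul_mul {a : A} {z w : 𝕜} (hz : z ∈ resolventSet 𝕜 a)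
    (hw : w ∈ resolventSet 𝕜 a) :
    resolvent a z - resolvent a w = (w - z) • (resolvent a w * resolvent a z) := by
  have hdiff : (w - z) • (1 : A) = (algebraMap 𝕜 A w - a) - (algebraMap 𝕜 A z - a) := by
    simp only [Algebra.algebraMap_eq_smul_one, sub_smul]
    abel
  rw [← mul_one (resolvent a w), ← smul_mul_assoc, ← mul_smul_comm, hdiff, mul_sub, sub_mul,
    resolvent, resolvent, mul_one, Ring.inverse_mul_cancel _ hw, one_mul, mul_assoc,
    Ring.mul_inverse_cancel _ hz, mul_one]

end ResolventIdentity

theorem differentiableOn_resolvent {𝕜 A : Type*} [NontriviallyNormedField 𝕜] [NormedRing A]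
    [NormedAlgebra 𝕜 A] [CompleteSpace A] (a : A) :
    DifferentiableOn 𝕜 (resolvent a) (resolventSet 𝕜 a) :=
  fun _ hz => (spectrum.hasDerivAt_resolvent_const_left hz).differentiableAt.differentiableWithinAt

section BanachAlgebra

variable {A : Type*} [NormedRing A] [NormedAlgebra ℂ A] [CompleteSpace A]

theorem resolvent_mul_circleIntegral_resolvent {a : A} {c w : ℂ} {r : ℝ} (hr : 0 ≤ r)
    (hsphere : sphere c r ⊆ resolventSet ℂ a) (hw : w ∈ resolventSet ℂ a)
    (hwr : w ∉ closedBall c r) :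
    resolvent a w * ∮ z in C(c, r), resolvent a z = ∮ z in C(c, r), (w - z)⁻¹ • resolvent a z := by
  have hcont : ContinuousOn (resolvent a) (sphere c r) :=
    (differentiableOn_resolvent a).continuousOn.mono hsphere
  have hne : ∀ z ∈ closedBall c r, w - z ≠ 0 := fun z hz =>
    sub_ne_zero.2 fun h => hwr (h ▸ hz)
  have hinv : ContinuousOn (fun z => (w - z)⁻¹) (sphere c r) :=
    (continuousOn_const.sub continuousOn_id).inv₀ fun z hz => hne z (sphere_subset_closedBall hz)
  have hzero : ∮ z in C(c, r), (w - z)⁻¹ = 0 := by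
    refine DiffContOnCl.circleIntegral_eq_zero hr ?_
    exact DifferentiableOn.diffContOnCl_ball (U := closedBall c r)
      (fun z hz => ((differentiableAt_const w).sub differentiableAt_id).inv (hne z hz)
        |>.differentiableWithinAt) subset_rfl
  calc resolvent a w * ∮ z in C(c, r), resolvent a z
      = ∮ z in C(c, r), resolvent a w * resolvent a z :=
        ((ContinuousLinearMap.mul ℂ A (resolvent a w)).circleIntegral_comp_comm
          (hcont.circleIntegrable hr)).symm
    _ = ∮ z in C(c, r), ((w - z)⁻¹ • resolvent a z - (w - z)⁻¹ • resolvent a w) := by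
        refine circleIntegral.integral_congr hr fun z hz => ?_
        rw [← smul_sub, resolvent_sub_resolvent_eq_sub_smul_mul (hsphere hz) hw,
          inv_smul_smul₀ (hne z (sphere_subset_closedBall hz))]
    _ = ∮ z in C(c, r), (w - z)⁻¹ • resolvent a z := by
        rw [circleIntegral.integral_sub (f := fun z => (w - z)⁻¹ • resolvent a z)
          (g := fun z => (w - z)⁻¹ • resolvent a w) ((hinv.smul hcont).circleIntegrable hr)
          ((hinv.smul continuousOn_const).circleIntegrable hr),
          circleIntegral.integral_smul_const, hzero, zero_smul, sub_zero]

theorem circleIntegral_resolvent_mul_self {a : A} {c : ℂ} {r R : ℝ} (hr : 0 < r) (hrR : r < R)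
    (ha : closedBall c R \ ball c r ⊆ resolventSet ℂ a) :
    (∮ z in C(c, r), resolvent a z) * (∮ z in C(c, r), resolvent a z) =
      (2 * Real.pi * I) • ∮ z in C(c, r), resolvent a z := by
  have hR : 0 < R := hr.trans hrR
  have hsphere_r : sphere c r ⊆ resolventSet ℂ a := fun z hz =>
    ha ⟨mem_closedBall_iff_norm.2 (mem_sphere_iff_norm.1 hz ▸ hrR.le),
      fun h => (mem_ball_iff_norm.1 h).ne (mem_sphere_iff_norm.1 hz)⟩
  have hsphere_R : sphere c R ⊆ resolventSet ℂ a := fun z hz =>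
    ha ⟨sphere_subset_closedBall hz,
      fun h => (mem_ball.1 h).not_ge (mem_sphere.1 hz ▸ hrR.le)⟩
  have hcont : ContinuousOn (resolvent a) (resolventSet ℂ a) :=
    (differentiableOn_resolvent a).continuousOn
  calc (∮ z in C(c, r), resolvent a z) * (∮ z in C(c, r), resolvent a z)
      = (∮ w in C(c, R), resolvent a w) * ∮ z in C(c, r), resolvent a z := by
        congr 1
        refine (circleIntegral_eq_of_differentiable_on_annulus_off_countable hr hrR.le
          countable_empty (hcont.mono ha) fun z hz => ?_).symm
        exact (differentiableOn_resolvent a).differentiableAt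
          ((spectrum.isOpen_resolventSet a).mem_nhds (ha ⟨ball_subset_closedBall hz.1.1,
            fun h => hz.1.2 (ball_subset_closedBall h)⟩))
    _ = ∮ w in C(c, R), resolvent a w * ∮ z in C(c, r), resolvent a z :=
        ((ContinuousLinearMap.mul ℂ A).flip _).circleIntegral_comp_comm
          ((hcont.mono hsphere_R).circleIntegrable hR.le) |>.symm
    _ = ∮ w in C(c, R), ∮ z in C(c, r), (w - z)⁻¹ • resolvent a z :=
        circleIntegral.integral_congr hR.le fun w hw =>
          resolvent_mul_circleIntegral_resolvent hr.le hsphere_r (hsphere_R hw)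
            (by rw [mem_closedBall, not_le, mem_sphere.1 hw]; exact hrR)
    _ = ∮ z in C(c, r), ∮ w in C(c, R), (w - z)⁻¹ • resolvent a z := by
        refine circleIntegral_circleIntegral_swap hr.le hR.le
          (F := fun z w => (w - z)⁻¹ • resolvent a z) ?_
        refine ContinuousOn.smul ((continuous_snd.sub continuous_fst).continuousOn.inv₀ ?_)
          ((hcont.mono hsphere_r).comp continuousOn_fst fun p hp => hp.1)
        rintro ⟨z, w⟩ ⟨hz, hw⟩
        refine sub_ne_zero.2 fun h => hrR.ne ?_
        rw [← mem_sphere.1 hz, ← mem_sphere.1 hw, h]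
    _ = ∮ z in C(c, r), (2 * Real.pi * I) • resolvent a z :=
        circleIntegral.integral_congr hr.le fun z hz => by
          rw [circleIntegral.integral_smul_const, circleIntegral.integral_sub_inv_of_mem_ball]
          rw [mem_ball, mem_sphere.1 hz]; exact hrR
    _ = (2 * Real.pi * I) • ∮ z in C(c, r), resolvent a z := circleIntegral.integral_smul _ _ _ _

end BanachAlgebra

section QuasiIdempotent

variable {𝕜 A : Type*} [NormedField 𝕜] [NormedRing A] [NormedAlgebra 𝕜 A] [CompleteSpace A]

theorem mem_resolventSet_of_norm_lt_norm {b : A} {k : 𝕜} (h : ‖b‖ < ‖k‖) :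
    k ∈ resolventSet 𝕜 b := by
  have hk : k ≠ 0 := norm_pos_iff.1 ((norm_nonneg b).trans_lt h)
  have hsmall : ‖k⁻¹ • b‖ < 1 := by
    rwa [norm_smul, norm_inv, inv_mul_lt_one₀ (norm_pos_iff.2 hk)]
  have hfactor : algebraMap 𝕜 A k - b = algebraMap 𝕜 A k * (1 - k⁻¹ • b) := by
    rw [mul_sub, mul_one, ← Algebra.smul_def, smul_inv_smul₀ hk]
  rw [spectrum.mem_resolventSet_iff, hfactor]
  exact ((isUnit_iff_ne_zero.2 hk).map (algebraMap 𝕜 A)).mul (Units.oneSub _ hsmall).isUnit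

theorem mem_resolventSet_of_norm_sq_sub_lt {a : A} {ξ : 𝕜} (h : ‖a ^ 2 - a‖ < ‖ξ ^ 2 - ξ‖) :
    ξ ∈ resolventSet 𝕜 a := by
  by_contra hξ
  have hmap := spectrum.subset_polynomial_aeval a (X ^ 2 - X) ⟨ξ, hξ, rfl⟩
  simp only [eval_sub, eval_pow, eval_X, map_sub, map_pow, aeval_X] at hmap
  exact hmap (mem_resolventSet_of_norm_lt_norm h)

theorem closedBall_diff_ball_subset_resolventSet_of_norm_sq_sub_lt {a : A} {ε : ℝ}
    (hε : ε < 1 / 4) (ha : ‖a ^ 2 - a‖ < ε) :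
    closedBall (1 : 𝕜) (1 - 2 * ε) \ ball 1 (2 * ε) ⊆ resolventSet 𝕜 a := by
  rintro ξ ⟨hout, hin⟩
  rw [mem_closedBall_iff_norm] at hout
  rw [mem_ball_iff_norm, not_lt] at hin
  refine mem_resolventSet_of_norm_sq_sub_lt (ha.trans_le ?_)
  have hξ : 1 - ‖ξ - 1‖ ≤ ‖ξ‖ := by
    simpa [norm_sub_rev] using norm_sub_norm_le (1 : 𝕜) (1 - ξ)
  have hε0 : 0 < ε := (norm_nonneg _).trans_lt ha
  -- on `2ε ≤ s ≤ 1 - 2ε` the concave `s (1 - s)` is at least `2ε (1 - 2ε) > ε`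
  calc ε ≤ (1 - ‖ξ - 1‖) * ‖ξ - 1‖ := by nlinarith
    _ ≤ ‖ξ‖ * ‖ξ - 1‖ := by gcongr
    _ = ‖ξ ^ 2 - ξ‖ := by rw [← norm_mul, sq, ← mul_sub_one]

end QuasiIdempotent

theorem stmt5_general {H : Type*} [NormedAddCommGroup H] [InnerProductSpace ℂ H] [CompleteSpace H]
    (P : H →L[ℂ] H) (ε : ℝ) (hε : ε < 1 / 4)
    (hP : ‖P ^ 2 - P‖ < ε) :
    (∀ ξ : ℂ, ‖ξ - 1‖ = 2 * ε → IsUnit (ξ • (1 : H →L[ℂ] H) - P)) ∧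
    (let Θ : H →L[ℂ] H :=
      (2 * Real.pi * Complex.I : ℂ)⁻¹ •
        (∮ ξ in C(1, 2 * ε), Ring.inverse (ξ • (1 : H →L[ℂ] H) - P));
     Θ * Θ = Θ) := by
  have hε0 : 0 < ε := (norm_nonneg _).trans_lt hP
  have hres :=
    closedBall_diff_ball_subset_resolventSet_of_norm_sq_sub_lt (𝕜 := ℂ) hε hP
  have hresolvent : (fun ξ : ℂ => Ring.inverse (ξ • (1 : H →L[ℂ] H) - P)) = resolvent P := by
    funext ξ
    simp only [resolvent, Algebra.algebraMap_eq_smul_one]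
  refine ⟨fun ξ hξ => ?_, ?_⟩
  · have hmem := hres ⟨mem_closedBall_iff_norm.2 (by linarith), by
      rw [mem_ball_iff_norm, hξ]; exact lt_irrefl _⟩
    rwa [spectrum.mem_resolventSet_iff, Algebra.algebraMap_eq_smul_one] at hmem
  · simp only [hresolvent]
    rw [smul_mul_smul_comm, circleIntegral_resolvent_mul_self (by linarith) (by linarith) hres,
      smul_smul, inv_mul_cancel_right₀ two_pi_I_ne_zero]

/-- Riesz projection: if `‖P² − P‖ < ε` with `0 < ε < 1/4`, then `ξ·I − P` is invertible
for every `ξ` on the circle of center `1` and radius `2ε`, and the Riesz projection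
`Θ(P) = (2πi)⁻¹ ∮_{|ξ−1|=2ε} (ξ·I − P)⁻¹ dξ` is an idempotent. -/
theorem stmt5 {H : Type*} [NormedAddCommGroup H] [InnerProductSpace ℂ H] [CompleteSpace H]
    (P : H →L[ℂ] H) (ε : ℝ) (hε0 : 0 < ε) (hε : ε < 1 / 4)
    (hP : ‖P ^ 2 - P‖ < ε) :
    (∀ ξ : ℂ, ‖ξ - 1‖ = 2 * ε → IsUnit (ξ • (1 : H →L[ℂ] H) - P)) ∧
    (let Θ : H →L[ℂ] H :=
      (2 * Real.pi * Complex.I : ℂ)⁻¹ •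
        (∮ ξ in C(1, 2 * ε), Ring.inverse (ξ • (1 : H →L[ℂ] H) - P));
     Θ * Θ = Θ) :=
  stmt5_general P ε hε hP
end

section
/- Let H be a complex Hilbert space, P a bounded linear operator on H, and ε a real number with 0 < ε < 1/4 such that ‖P² − P‖ < ε. Then ξ·I − P is invertible for every ξ with |ξ| = 2ε and for every ξ with |ξ − 1| = 2ε, and P = (1/(2πi)) ∮_{|ξ|=2ε} ξ (ξ·I − P)⁻¹ dξ + (1/(2πi)) ∮_{|ξ−1|=2ε} ξ (ξ·I − P)⁻¹ dξ, where both circle integrals are taken counterclockwise over the circles of radius 2ε centered at 0 and at 1 respectively. -/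
/-! With `N = P² - P` and `μ(ξ) = ξ(ξ - 1)`, the factorisation `(ξ - P)((ξ - 1) + P) = μ(ξ) - N`
and the bound `‖N‖ < ε < |μ(ξ)|` on both circles invert `ξ - P` and give the expansion
`ξ(ξ - P)⁻¹ = (1 + (ξ - 1)⁻¹ P) ∑ₖ μ(ξ)⁻ᵏ Nᵏ`, uniformly convergent on the circles. Integrating
termwise leaves only scalar integrals of `ξ⁻ᵃ(ξ - 1)⁻ᵇ` over the two circles; by the partial
fraction `1/(ξ(ξ - 1)) = 1/(ξ - 1) - 1/ξ` their sum is `2πi` if `a + b = 1` and `0` otherwise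
(the residue at infinity), so only the term `k = 0` survives, and it contributes `2πi P`. -/

open Complex Metric

lemma circleIntegral_inv_sub_pow_of_ne_one (c w : ℂ) (R : ℝ) {n : ℕ} (hn : n ≠ 1) :
    ∮ z in C(c, R), ((z - w) ^ n)⁻¹ = 0 := by
  simpa [zpow_neg] using circleIntegral.integral_sub_zpow_of_ne (n := -(n : ℤ)) (by omega) c w R

lemma circleIntegral_sub_inv_of_notMem_closedBall {c w : ℂ} {R : ℝ} (hR : 0 ≤ R)
    (hw : w ∉ closedBall c R) : ∮ z in C(c, R), (z - w)⁻¹ = 0 :=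
  DiffContOnCl.circleIntegral_eq_zero hR <|
    ((differentiableOn_id.sub_const w).inv fun _ hz => sub_ne_zero.2 hz).diffContOnCl_ball
      fun _ hz h => hw (h ▸ hz)

lemma continuousOn_inv_pow_mul_sub_one_pow {s : Set ℂ} (h0 : (0 : ℂ) ∉ s) (h1 : (1 : ℂ) ∉ s)
    (a b : ℕ) : ContinuousOn (fun z : ℂ => (z ^ a * (z - 1) ^ b)⁻¹) s :=
  (by fun_prop : Continuous fun z : ℂ => z ^ a * (z - 1) ^ b).continuousOn.inv₀ fun z hz =>
    mul_ne_zero (pow_ne_zero _ (ne_of_mem_of_not_mem hz h0))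
      (pow_ne_zero _ (sub_ne_zero.2 (ne_of_mem_of_not_mem hz h1)))

lemma circleIntegral_inv_pow_succ_mul_sub_one_pow_succ {c : ℂ} {R : ℝ} (hR : 0 ≤ R)
    (h0 : (0 : ℂ) ∉ sphere c R) (h1 : (1 : ℂ) ∉ sphere c R) (a b : ℕ) :
    ∮ z in C(c, R), (z ^ (a + 1) * (z - 1) ^ (b + 1))⁻¹ =
      (∮ z in C(c, R), (z ^ a * (z - 1) ^ (b + 1))⁻¹) -
        ∮ z in C(c, R), (z ^ (a + 1) * (z - 1) ^ b)⁻¹ := by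
  rw [← circleIntegral.integral_sub
    ((continuousOn_inv_pow_mul_sub_one_pow h0 h1 _ _).circleIntegrable hR)
    ((continuousOn_inv_pow_mul_sub_one_pow h0 h1 _ _).circleIntegrable hR)]
  refine circleIntegral.integral_congr hR fun z hz => ?_
  have hz0 : z ≠ 0 := ne_of_mem_of_not_mem hz h0
  have hz1 : z - 1 ≠ 0 := sub_ne_zero.2 (ne_of_mem_of_not_mem hz h1)
  field_simp
  ring

noncomputable def twoCircleIntegral {E : Type*} [NormedAddCommGroup E] [NormedSpace ℂ E]
    (f : ℂ → E) (r : ℝ) : E :=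
  (∮ z in C(0, r), f z) + ∮ z in C(1, r), f z

section TwoCircles

variable {r : ℝ} (hr0 : 0 < r) (hr1 : r < 1)
include hr0 hr1

lemma zero_notMem_sphere_and_one_notMem_sphere {c : ℂ} (hc : c = 0 ∨ c = 1) :
    (0 : ℂ) ∉ sphere c r ∧ (1 : ℂ) ∉ sphere c r := by
  rcases hc with rfl | rfl <;> simp <;> constructor <;> linarith

lemma twoCircleIntegral_inv_sub_pow {w : ℂ} (hw : w = 0 ∨ w = 1) (n : ℕ) :
    twoCircleIntegral (fun z => ((z - w) ^ n)⁻¹) r = if n = 1 then 2 * Real.pi * I else 0 := by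
  unfold twoCircleIntegral
  split_ifs with hn
  · subst hn
    simp only [pow_one]
    rcases hw with rfl | rfl
    · rw [circleIntegral.integral_sub_inv_of_mem_ball (by simpa using hr0),
        circleIntegral_sub_inv_of_notMem_closedBall hr0.le (by simpa using hr1), add_zero]
    · rw [circleIntegral_sub_inv_of_notMem_closedBall hr0.le (by simpa using hr1),
        circleIntegral.integral_sub_inv_of_mem_ball (by simpa using hr0), zero_add]
  · rw [circleIntegral_inv_sub_pow_of_ne_one _ _ _ hn,
      circleIntegral_inv_sub_pow_of_ne_one _ _ _ hn, add_zero]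

lemma twoCircleIntegral_inv_pow_succ_mul_sub_one_pow_succ (a b : ℕ) :
    twoCircleIntegral (fun z => (z ^ (a + 1) * (z - 1) ^ (b + 1))⁻¹) r =
      twoCircleIntegral (fun z => (z ^ a * (z - 1) ^ (b + 1))⁻¹) r -
        twoCircleIntegral (fun z => (z ^ (a + 1) * (z - 1) ^ b)⁻¹) r := by
  obtain ⟨h00, h10⟩ := zero_notMem_sphere_and_one_notMem_sphere hr0 hr1 (Or.inl rfl)
  obtain ⟨h01, h11⟩ := zero_notMem_sphere_and_one_notMem_sphere hr0 hr1 (Or.inr rfl)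
  simp only [twoCircleIntegral]
  rw [circleIntegral_inv_pow_succ_mul_sub_one_pow_succ hr0.le h00 h10,
    circleIntegral_inv_pow_succ_mul_sub_one_pow_succ hr0.le h01 h11]
  abel

theorem twoCircleIntegral_inv_pow_mul_sub_one_pow (a b : ℕ) :
    twoCircleIntegral (fun z => (z ^ a * (z - 1) ^ b)⁻¹) r =
      if a + b = 1 then 2 * Real.pi * I else 0 := by
  induction a generalizing b with
  | zero => simpa using twoCircleIntegral_inv_sub_pow hr0 hr1 (Or.inr rfl) b
  | succ a iha =>
    induction b with
    | zero => simpa using twoCircleIntegral_inv_sub_pow hr0 hr1 (Or.inl rfl) (a + 1)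
    | succ b ihb =>
      rw [twoCircleIntegral_inv_pow_succ_mul_sub_one_pow_succ hr0 hr1, iha, ihb,
        show a + 1 + b = a + (b + 1) by ring, sub_self, if_neg (by omega)]

end TwoCircles

lemma smul_one_sub_mul_smul_one_add {R A : Type*} [CommRing R] [Ring A] [Algebra R A]
    (P : A) (ξ : R) :
    (ξ • 1 - P) * ((ξ - 1) • 1 + P) = (ξ * (ξ - 1)) • 1 - (P ^ 2 - P) ∧
      ((ξ - 1) • 1 + P) * (ξ • 1 - P) = (ξ * (ξ - 1)) • 1 - (P ^ 2 - P) := by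
  constructor <;>
  · simp only [sub_mul, mul_sub, mul_add, add_mul, smul_mul_assoc, mul_smul_comm, one_mul,
      mul_one, pow_two]
    module

lemma norm_mul_pow_le {A : Type*} [SeminormedRing A] (y x : A) (k : ℕ) :
    ‖y * x ^ k‖ ≤ ‖y‖ * ‖x‖ ^ k := by
  rcases Nat.eq_zero_or_pos k with rfl | hk
  · simp
  · exact (norm_mul_le _ _).trans (by gcongr; exact norm_pow_le' x hk)

section BanachAlgebra

variable {A : Type*} [NormedRing A] [NormedAlgebra ℂ A]

lemma norm_inv_smul_lt_one_s6 {μ : ℂ} {N : A} (h : ‖N‖ < ‖μ‖) : ‖μ⁻¹ • N‖ < 1 := by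
  rw [norm_smul, norm_inv, inv_mul_lt_one₀ ((norm_nonneg N).trans_lt h)]
  exact h

lemma isUnit_smul_one_sub_and_smul_ringInverse_eq [CompleteSpace A] (P : A) {ξ : ℂ}
    (h : ‖P ^ 2 - P‖ < ‖ξ * (ξ - 1)‖) :
    IsUnit (ξ • 1 - P) ∧
      ξ • Ring.inverse (ξ • 1 - P) =
        (1 + (ξ - 1)⁻¹ • P) * Ring.inverse (1 - (ξ * (ξ - 1))⁻¹ • (P ^ 2 - P)) := by
  have hμ : ξ * (ξ - 1) ≠ 0 := norm_pos_iff.1 ((norm_nonneg _).trans_lt h)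
  have hξ : ξ ≠ 0 := left_ne_zero_of_mul hμ
  have hξ1 : ξ - 1 ≠ 0 := right_ne_zero_of_mul hμ
  set w : A := (ξ * (ξ - 1))⁻¹ • ((ξ - 1) • 1 + P) with hw
  have hu : IsUnit (1 - (ξ * (ξ - 1))⁻¹ • (P ^ 2 - P)) :=
    isUnit_one_sub_of_norm_lt_one (norm_inv_smul_lt_one_s6 h)
  have hfac : (ξ • 1 - P) * w = 1 - (ξ * (ξ - 1))⁻¹ • (P ^ 2 - P) ∧
      w * (ξ • 1 - P) = 1 - (ξ * (ξ - 1))⁻¹ • (P ^ 2 - P) := by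
    rw [hw, mul_smul_comm, smul_mul_assoc, (smul_one_sub_mul_smul_one_add P ξ).1,
      (smul_one_sub_mul_smul_one_add P ξ).2, smul_sub, smul_smul, inv_mul_cancel₀ hμ, one_smul]
    exact ⟨rfl, rfl⟩
  have hcomm : Commute (ξ • 1 - P) w := hfac.1.trans hfac.2.symm
  have hunit : IsUnit (ξ • 1 - P) := (hcomm.isUnit_mul_iff.1 (hfac.1 ▸ hu)).1
  refine ⟨hunit, ?_⟩
  have hinv : Ring.inverse (ξ • 1 - P) = w * Ring.inverse (1 - (ξ * (ξ - 1))⁻¹ • (P ^ 2 - P)) := by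
    rw [Ring.eq_mul_inverse_iff_mul_eq _ _ _ hu, ← hfac.1, Ring.inverse_mul_cancel_left _ _ hunit]
  have hξw : ξ • w = 1 + (ξ - 1)⁻¹ • P := by
    rw [hw, smul_smul, smul_add, smul_smul, mul_inv, ← mul_assoc, mul_inv_cancel₀ hξ, one_mul,
      inv_mul_cancel₀ hξ1, one_smul]
  rw [hinv, ← smul_mul_assoc, hξw]

theorem hasSum_circleIntegral_mul_pow [CompleteSpace A] {c : ℂ} {R : ℝ} (hR : 0 ≤ R)
    {y x : ℂ → A} (hy : ContinuousOn y (sphere c R)) (hx : ContinuousOn x (sphere c R))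
    (hx1 : ∀ z ∈ sphere c R, ‖x z‖ < 1) :
    HasSum (fun k => ∮ z in C(c, R), y z * x z ^ k)
      (∮ z in C(c, R), y z * Ring.inverse (1 - x z)) := by
  obtain ⟨C, hC⟩ := (isCompact_sphere c R).exists_bound_of_continuousOn hy
  obtain ⟨z₀, hz₀, hmax⟩ :=
    (isCompact_sphere c R).exists_isMaxOn (NormedSpace.sphere_nonempty.2 hR) hx.norm
  have hq0 : 0 ≤ ‖x z₀‖ := norm_nonneg _
  have hq1 : ‖x z₀‖ < 1 := hx1 z₀ hz₀
  have hmem (θ : ℝ) : circleMap c R θ ∈ sphere c R := circleMap_mem_sphere c hR θ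
  refine intervalIntegral.hasSum_integral_of_dominated_convergence
    (fun k _ => R * (C * ‖x z₀‖ ^ k)) (fun k => ?_) (fun k => ?_) ?_ intervalIntegrable_const ?_
  · simp only [deriv_circleMap]
    exact (((continuous_circleMap 0 R).mul continuous_const).smul
      ((hy.mul (hx.pow k)).comp_continuous (continuous_circleMap c R) hmem)).aestronglyMeasurable
  · refine Filter.Eventually.of_forall fun θ _ => ?_
    rw [norm_smul, deriv_circleMap, norm_mul, norm_circleMap_zero, norm_I, mul_one,
      abs_of_nonneg hR]
    gcongr
    calc ‖y (circleMap c R θ) * x (circleMap c R θ) ^ k‖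
        ≤ ‖y (circleMap c R θ)‖ * ‖x (circleMap c R θ)‖ ^ k := norm_mul_pow_le _ _ k
      _ ≤ C * ‖x z₀‖ ^ k := by
        gcongr
        · exact (norm_nonneg _).trans (hC _ (hmem θ))
        · exact hC _ (hmem θ)
        · exact hmax (hmem θ)
  · exact Filter.Eventually.of_forall fun θ _ =>
      ((summable_geometric_of_lt_one hq0 hq1).mul_left C).mul_left R
  · exact Filter.Eventually.of_forall fun θ _ =>
      ((hasSum_geom_series_inverse _ (hx1 _ (hmem θ))).mul_left _).const_smul _

lemma circleIntegral_one_add_smul_mul_pow [CompleteSpace A] (P N : A) {c : ℂ} {R : ℝ}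
    (hR : 0 ≤ R) (h0 : (0 : ℂ) ∉ sphere c R) (h1 : (1 : ℂ) ∉ sphere c R) (k : ℕ) :
    ∮ z in C(c, R), (1 + (z - 1)⁻¹ • P) * ((z * (z - 1))⁻¹ • N) ^ k =
      (∮ z in C(c, R), (z ^ k * (z - 1) ^ k)⁻¹) • N ^ k +
        (∮ z in C(c, R), (z ^ k * (z - 1) ^ (k + 1))⁻¹) • (P * N ^ k) := by
  have hexpand : (fun z : ℂ => (1 + (z - 1)⁻¹ • P) * ((z * (z - 1))⁻¹ • N) ^ k) =
      fun z => (z ^ k * (z - 1) ^ k)⁻¹ • N ^ k + (z ^ k * (z - 1) ^ (k + 1))⁻¹ • (P * N ^ k) := by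
    funext z
    rw [smul_pow, add_mul, one_mul, smul_mul_assoc, mul_smul_comm, smul_smul]
    congr 2
    · rw [inv_pow, mul_pow]
    · simp only [inv_pow, mul_pow, pow_succ, mul_inv]
      ring
  have hint (a b : ℕ) (X : A) : CircleIntegrable (fun z => (z ^ a * (z - 1) ^ b)⁻¹ • X) c R :=
    ((continuousOn_inv_pow_mul_sub_one_pow h0 h1 a b).smul continuousOn_const).circleIntegrable hR
  rw [hexpand, circleIntegral.integral_add (hint _ _ _) (hint _ _ _),
    circleIntegral.integral_smul_const, circleIntegral.integral_smul_const]

lemma twoCircleIntegral_one_add_smul_mul_pow [CompleteSpace A] {r : ℝ} (hr0 : 0 < r) (hr1 : r < 1)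
    (P N : A) (k : ℕ) :
    twoCircleIntegral (fun z => (1 + (z - 1)⁻¹ • P) * ((z * (z - 1))⁻¹ • N) ^ k) r =
      if k = 0 then (2 * Real.pi * I) • P else 0 := by
  obtain ⟨h00, h10⟩ := zero_notMem_sphere_and_one_notMem_sphere hr0 hr1 (Or.inl rfl)
  obtain ⟨h01, h11⟩ := zero_notMem_sphere_and_one_notMem_sphere hr0 hr1 (Or.inr rfl)
  have hscalar := twoCircleIntegral_inv_pow_mul_sub_one_pow hr0 hr1
  simp only [twoCircleIntegral] at hscalar ⊢
  rw [circleIntegral_one_add_smul_mul_pow P N hr0.le h00 h10,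
    circleIntegral_one_add_smul_mul_pow P N hr0.le h01 h11, add_add_add_comm, ← add_smul,
    ← add_smul, hscalar, hscalar, if_neg (by omega), zero_smul, zero_add]
  rcases Nat.eq_zero_or_pos k with rfl | hk
  · simp
  · rw [if_neg (by omega), if_neg (by omega), zero_smul]

theorem twoCircleIntegral_smul_ringInverse [CompleteSpace A] (P : A) {r : ℝ} (hr0 : 0 < r)
    (hr1 : r < 1) (h : ∀ z : ℂ, ‖z‖ = r ∨ ‖z - 1‖ = r → ‖P ^ 2 - P‖ < ‖z * (z - 1)‖) :
    twoCircleIntegral (fun z => z • Ring.inverse (z • 1 - P)) r = (2 * Real.pi * I) • P := by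
  have hcircle (c : ℂ) (hc : c = 0 ∨ c = 1) :
      HasSum (fun k => ∮ z in C(c, r), (1 + (z - 1)⁻¹ • P) * ((z * (z - 1))⁻¹ • (P ^ 2 - P)) ^ k)
        (∮ z in C(c, r), z • Ring.inverse (z • 1 - P)) := by
    obtain ⟨h0, h1⟩ := zero_notMem_sphere_and_one_notMem_sphere hr0 hr1 hc
    have hμ : ∀ z ∈ sphere c r, ‖P ^ 2 - P‖ < ‖z * (z - 1)‖ := by
      rcases hc with rfl | rfl <;> intro z hz
      · exact h z (Or.inl (mem_sphere_zero_iff_norm.1 hz))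
      · exact h z (Or.inr (mem_sphere_iff_norm.1 hz))
    have hz0 : ∀ z ∈ sphere c r, z ≠ 0 := fun z hz => ne_of_mem_of_not_mem hz h0
    have hz1 : ∀ z ∈ sphere c r, z - 1 ≠ 0 := fun z hz => sub_ne_zero.2 (ne_of_mem_of_not_mem hz h1)
    rw [circleIntegral.integral_congr hr0.le
      fun z hz => (isUnit_smul_one_sub_and_smul_ringInverse_eq P (hμ z hz)).2]
    refine hasSum_circleIntegral_mul_pow hr0.le ?_ ?_ fun z hz => norm_inv_smul_lt_one_s6 (hμ z hz)
    · exact continuousOn_const.add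
        (((continuousOn_id.sub continuousOn_const).inv₀ hz1).smul continuousOn_const)
    · exact ((continuousOn_id.mul (continuousOn_id.sub continuousOn_const)).inv₀
        fun z hz => mul_ne_zero (hz0 z hz) (hz1 z hz)).smul continuousOn_const
  refine ((hcircle 0 (Or.inl rfl)).add (hcircle 1 (Or.inr rfl))).unique ?_
  convert hasSum_ite_eq 0 ((2 * Real.pi * I) • P) with k
  exact twoCircleIntegral_one_add_smul_mul_pow hr0 hr1 P _ k

end BanachAlgebra

lemma le_norm_mul_sub_one {z : ℂ} {r : ℝ} (hz : ‖z‖ = r ∨ ‖z - 1‖ = r) :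
    r * (1 - r) ≤ ‖z * (z - 1)‖ := by
  have hsub : 1 - ‖z‖ ≤ ‖z - 1‖ := by
    simpa [norm_sub_rev z 1] using norm_sub_norm_le (1 : ℂ) z
  have hsub' : 1 - ‖z - 1‖ ≤ ‖z‖ := by
    have := norm_sub_norm_le (1 : ℂ) (1 - z)
    rwa [sub_sub_cancel, norm_one, norm_sub_rev] at this
  rw [norm_mul]
  rcases hz with hz | hz
  · rw [hz] at hsub ⊢
    exact mul_le_mul_of_nonneg_left hsub (hz ▸ norm_nonneg z)
  · rw [hz] at hsub' ⊢
    rw [mul_comm]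
    exact mul_le_mul_of_nonneg_right hsub' (hz ▸ norm_nonneg _)

/-- Cauchy-integral decomposition: if `‖P² − P‖ < ε` with `0 < ε < 1/4`, then `ξ·I − P`
is invertible for every `ξ` with `|ξ| = 2ε` and every `ξ` with `|ξ − 1| = 2ε`, and
`P = (2πi)⁻¹ ∮_{|ξ|=2ε} ξ(ξ·I − P)⁻¹ dξ + (2πi)⁻¹ ∮_{|ξ−1|=2ε} ξ(ξ·I − P)⁻¹ dξ`. -/
theorem stmt6 {H : Type*} [NormedAddCommGroup H] [InnerProductSpace ℂ H] [CompleteSpace H]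
    (P : H →L[ℂ] H) (ε : ℝ) (hε0 : 0 < ε) (hε : ε < 1 / 4)
    (hP : ‖P ^ 2 - P‖ < ε) :
    (∀ ξ : ℂ, ‖ξ‖ = 2 * ε → IsUnit (ξ • (1 : H →L[ℂ] H) - P)) ∧
    (∀ ξ : ℂ, ‖ξ - 1‖ = 2 * ε → IsUnit (ξ • (1 : H →L[ℂ] H) - P)) ∧
    P = (2 * Real.pi * Complex.I : ℂ)⁻¹ •
          (∮ ξ in C(0, 2 * ε), ξ • Ring.inverse (ξ • (1 : H →L[ℂ] H) - P)) +
        (2 * Real.pi * Complex.I : ℂ)⁻¹ •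
          (∮ ξ in C(1, 2 * ε), ξ • Ring.inverse (ξ • (1 : H →L[ℂ] H) - P)) := by
  have hμ (ξ : ℂ) (hξ : ‖ξ‖ = 2 * ε ∨ ‖ξ - 1‖ = 2 * ε) : ‖P ^ 2 - P‖ < ‖ξ * (ξ - 1)‖ :=
    hP.trans_le ((by nlinarith : ε ≤ 2 * ε * (1 - 2 * ε)).trans (le_norm_mul_sub_one hξ))
  refine ⟨fun ξ hξ => (isUnit_smul_one_sub_and_smul_ringInverse_eq P (hμ ξ (Or.inl hξ))).1,
    fun ξ hξ => (isUnit_smul_one_sub_and_smul_ringInverse_eq P (hμ ξ (Or.inr hξ))).1, ?_⟩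
  rw [← smul_add, ← twoCircleIntegral,
    twoCircleIntegral_smul_ringInverse P (by positivity) (by linarith) hμ, smul_smul,
    inv_mul_cancel₀ two_pi_I_ne_zero, one_smul]
end

section
/- Let H be a complex Hilbert space, P a bounded linear operator on H, and ε a real number with 0 < ε < 1/4 such that ‖P² − P‖ < ε. Let Θ(P) := (1/(2πi)) ∮_{|ξ−1|=2ε} (ξ·I − P)⁻¹ dξ be the Riesz projection over the circle of center 1 and radius 2ε (traversed counterclockwise; ξ·I − P is invertible on this circle). Then ‖Θ(P) − P‖ ≤ (4ε/(1 − 4ε))·(‖P‖ + ‖I − P‖ + 4ε). -/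
/-!
If `P` were idempotent its resolvent would be the partial fraction
`Θ(ξ) = ξ⁻¹ (1 - P) + (ξ - 1)⁻¹ P`, whose integral over a small circle around `1` is `2πi P`.
In general, writing `D = P² - P`, one has `(ξ - P)((ξ - 1) + P) = (ξ² - ξ) - D`, which gives
`R(ξ) = Θ(ξ) + (ξ² - ξ)⁻¹ R(ξ) D` for the resolvent `R`, hence
`‖R(ξ) - Θ(ξ)‖ ≤ ‖Θ(ξ)‖ ‖D‖ / (|ξ² - ξ| - ‖D‖)`. Since `ξ` lies in the resolvent set whenever
`|ξ² - ξ| > ‖D‖` (spectral mapping for `X² - X`), `R - Θ` is holomorphic on the annulus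
`2ε ≤ |ξ - 1| ≤ 1/2`, so its integral may be computed on the circle of radius `1/2`, where
`|ξ² - ξ| ≥ 1/4` and `‖Θ‖ ≤ 2 (‖P‖ + ‖1 - P‖)`.
-/

open Complex Metric Polynomial spectrum Real

section Algebra

variable {A : Type*} [Ring A] [Algebra ℂ A]

noncomputable def idempotentResolvent (P : A) (ξ : ℂ) : A := ξ⁻¹ • (1 - P) + (ξ - 1)⁻¹ • P

theorem resolvent_eq_idempotentResolvent_add {P : A} {ξ : ℂ} (hξ : ξ ∈ resolventSet ℂ P)
    (h0 : ξ ≠ 0) (h1 : ξ ≠ 1) :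
    resolvent P ξ = idempotentResolvent P ξ + (ξ ^ 2 - ξ)⁻¹ • (resolvent P ξ * (P ^ 2 - P)) := by
  set R := resolvent P ξ
  have hR : R * (ξ • 1 - P) = 1 := by
    rw [← Algebra.algebraMap_eq_smul_one]
    exact Ring.inverse_mul_cancel _ (mem_resolventSet_iff.mp hξ)
  have hμ : ξ ^ 2 - ξ ≠ 0 := by
    rw [sq, ← mul_sub_one]; exact mul_ne_zero h0 (sub_ne_zero.mpr h1)
  have key : (ξ ^ 2 - ξ) • R - R * (P ^ 2 - P) = (ξ - 1) • 1 + P := by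
    calc (ξ ^ 2 - ξ) • R - R * (P ^ 2 - P) = R * (ξ • 1 - P) * ((ξ - 1) • 1 + P) := by
          simp only [mul_add, mul_sub, sub_mul, mul_smul_comm, smul_mul_assoc, mul_one,
            pow_two, ← mul_assoc]
          match_scalars <;> ring
      _ = (ξ - 1) • 1 + P := by rw [hR, one_mul]
  have hpartial : (ξ ^ 2 - ξ)⁻¹ • ((ξ - 1) • (1 : A) + P) = idempotentResolvent P ξ := by
    have h1' : ξ - 1 ≠ 0 := sub_ne_zero.mpr h1
    simp only [idempotentResolvent, smul_add, smul_sub, smul_smul]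
    match_scalars <;> field_simp
    ring
  rw [← hpartial, ← smul_add, ← key, sub_add_cancel, inv_smul_smul₀ hμ]

end Algebra

theorem one_sub_norm_sub_one_le_norm (ξ : ℂ) : 1 - ‖ξ - 1‖ ≤ ‖ξ‖ := by
  have := norm_sub_norm_le (1 : ℂ) ξ
  rw [norm_one, norm_sub_rev] at this
  linarith

theorem one_sub_norm_sub_one_mul_le_norm_sq_sub (ξ : ℂ) :
    (1 - ‖ξ - 1‖) * ‖ξ - 1‖ ≤ ‖ξ ^ 2 - ξ‖ := by
  rw [sq, ← mul_sub_one, norm_mul]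
  exact mul_le_mul_of_nonneg_right (one_sub_norm_sub_one_le_norm ξ) (norm_nonneg _)

section Normed

variable {A : Type*} [NormedRing A] [NormedAlgebra ℂ A]

theorem norm_idempotentResolvent_le (P : A) (ξ : ℂ) :
    ‖idempotentResolvent P ξ‖ ≤ ‖ξ‖⁻¹ * ‖1 - P‖ + ‖ξ - 1‖⁻¹ * ‖P‖ := by
  refine (norm_add_le _ _).trans_eq ?_
  rw [norm_smul, norm_smul, norm_inv, norm_inv]

theorem norm_resolvent_sub_idempotentResolvent_le {P : A} {ξ : ℂ} (hξ : ξ ∈ resolventSet ℂ P)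
    (hD : ‖P ^ 2 - P‖ < ‖ξ ^ 2 - ξ‖) :
    ‖resolvent P ξ - idempotentResolvent P ξ‖ ≤
      ‖idempotentResolvent P ξ‖ * ‖P ^ 2 - P‖ / (‖ξ ^ 2 - ξ‖ - ‖P ^ 2 - P‖) := by
  have hμ : 0 < ‖ξ ^ 2 - ξ‖ := (norm_nonneg _).trans_lt hD
  have h0 : ξ ≠ 0 := by rintro rfl; simp at hμ
  have h1 : ξ ≠ 1 := by rintro rfl; simp at hμ
  set R := resolvent P ξ
  set Θ := idempotentResolvent P ξ
  have hRΘ : ‖R - Θ‖ * ‖ξ ^ 2 - ξ‖ ≤ (‖Θ‖ + ‖R - Θ‖) * ‖P ^ 2 - P‖ :=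
    calc ‖R - Θ‖ * ‖ξ ^ 2 - ξ‖ = ‖R * (P ^ 2 - P)‖ := by
          rw [sub_eq_of_eq_add' (resolvent_eq_idempotentResolvent_add hξ h0 h1), norm_smul,
            norm_inv, mul_right_comm, inv_mul_cancel₀ hμ.ne', one_mul]
      _ ≤ ‖R‖ * ‖P ^ 2 - P‖ := norm_mul_le _ _
      _ ≤ (‖Θ‖ + ‖R - Θ‖) * ‖P ^ 2 - P‖ := by gcongr; exact norm_le_norm_add_norm_sub' R Θ
  rw [le_div_iff₀ (sub_pos.mpr hD)]
  nlinarith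

theorem differentiableAt_idempotentResolvent (P : A) {ξ : ℂ} (h0 : ξ ≠ 0) (h1 : ξ ≠ 1) :
    DifferentiableAt ℂ (idempotentResolvent P) ξ :=
  ((differentiableAt_inv h0).smul_const _).add
    (((differentiableAt_id.sub_const (1 : ℂ)).inv (sub_ne_zero.mpr h1)).smul_const P)

theorem norm_resolvent_sub_idempotentResolvent_le_of_norm_sub_one_eq_half {P : A} {ε : ℝ}
    (hε : ε < 1 / 4) (hP : ‖P ^ 2 - P‖ ≤ ε) {ξ : ℂ} (hξ : ξ ∈ resolventSet ℂ P)
    (hξ1 : ‖ξ - 1‖ = 1 / 2) :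
    ‖resolvent P ξ - idempotentResolvent P ξ‖ ≤ 8 * ε / (1 - 4 * ε) * (‖P‖ + ‖1 - P‖) := by
  have hε0 : 0 ≤ ε := (norm_nonneg _).trans hP
  have hμ : 1 / 4 ≤ ‖ξ ^ 2 - ξ‖ := by
    have := one_sub_norm_sub_one_mul_le_norm_sq_sub ξ
    rw [hξ1] at this
    linarith
  have hξnorm : 1 / 2 ≤ ‖ξ‖ := by
    have := one_sub_norm_sub_one_le_norm ξ
    rw [hξ1] at this
    linarith
  have hΘ : ‖idempotentResolvent P ξ‖ ≤ 2 * (‖P‖ + ‖1 - P‖) := by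
    refine (norm_idempotentResolvent_le P ξ).trans ?_
    rw [hξ1]
    have : ‖ξ‖⁻¹ ≤ 2 := by rw [inv_le_comm₀ (by linarith) two_pos]; linarith
    nlinarith [norm_nonneg P, norm_nonneg (1 - P)]
  calc ‖resolvent P ξ - idempotentResolvent P ξ‖
      ≤ ‖idempotentResolvent P ξ‖ * ‖P ^ 2 - P‖ / (‖ξ ^ 2 - ξ‖ - ‖P ^ 2 - P‖) :=
        norm_resolvent_sub_idempotentResolvent_le hξ (by linarith)
    _ ≤ 2 * (‖P‖ + ‖1 - P‖) * ε / (1 / 4 - ε) := by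
        gcongr
    _ = 8 * ε / (1 - 4 * ε) * (‖P‖ + ‖1 - P‖) := by
        field_simp
        ring

variable [CompleteSpace A]

theorem mem_resolventSet_of_norm_sq_sub_mul_lt {P : A} {ξ : ℂ}
    (h : ‖P ^ 2 - P‖ * ‖(1 : A)‖ < ‖ξ ^ 2 - ξ‖) : ξ ∈ resolventSet ℂ P := by
  by_contra hσ
  have hmap := subset_polynomial_aeval P (X ^ 2 - X) ⟨ξ, hσ, rfl⟩
  simp only [eval_sub, eval_pow, eval_X, map_sub, map_pow, aeval_X] at hmap
  exact h.not_ge (norm_le_norm_mul_of_mem hmap)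

theorem circleIntegral_idempotentResolvent (P : A) {r : ℝ} (hr0 : 0 < r) (hr1 : r < 1) :
    ∮ ξ in C(1, r), idempotentResolvent P ξ = (2 * π * I : ℂ) • P := by
  have h0 : ∀ ξ ∈ closedBall (1 : ℂ) r, ξ ≠ 0 := by
    rintro ξ hξ rfl
    rw [mem_closedBall_iff_norm, zero_sub, norm_neg, norm_one] at hξ
    linarith
  have hinv0 : ContinuousOn (fun ξ : ℂ => ξ⁻¹) (closedBall 1 r) := continuousOn_inv₀.mono h0
  have hint0 : CircleIntegrable (fun ξ : ℂ => ξ⁻¹ • (1 - P)) 1 r :=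
    ((hinv0.mono sphere_subset_closedBall).smul continuousOn_const).circleIntegrable hr0.le
  have hint1 : CircleIntegrable (fun ξ : ℂ => (ξ - 1)⁻¹ • P) 1 r :=
    (((continuousOn_id.sub continuousOn_const).inv₀ fun ξ hξ =>
      sub_ne_zero.mpr (ne_of_mem_sphere hξ hr0.ne')).smul continuousOn_const).circleIntegrable hr0.le
  have hcauchy : ∮ ξ in C(1, r), ξ⁻¹ = 0 :=
    circleIntegral_eq_zero_of_differentiable_on_off_countable hr0.le Set.countable_empty hinv0
      fun ξ hξ => differentiableAt_inv (h0 ξ (ball_subset_closedBall hξ.1))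
  simp only [idempotentResolvent]
  rw [circleIntegral.integral_add hint0 hint1,
    circleIntegral.integral_smul_const, circleIntegral.integral_smul_const, hcauchy,
    circleIntegral.integral_sub_inv_of_mem_ball (mem_ball_self hr0), zero_smul, zero_add]

theorem mem_resolventSet_of_two_mul_le_norm_sub_one (hA : ‖(1 : A)‖ ≤ 1) {P : A} {ε : ℝ}
    (hP : ‖P ^ 2 - P‖ < ε) {ξ : ℂ} (hlo : 2 * ε ≤ ‖ξ - 1‖) (hhi : ‖ξ - 1‖ ≤ 1 / 2) :
    ξ ∈ resolventSet ℂ P := by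
  refine mem_resolventSet_of_norm_sq_sub_mul_lt ?_
  have hμ := one_sub_norm_sub_one_mul_le_norm_sq_sub ξ
  have hhalf : ‖ξ - 1‖ / 2 ≤ (1 - ‖ξ - 1‖) * ‖ξ - 1‖ := by nlinarith [norm_nonneg (ξ - 1)]
  have hD := mul_le_of_le_one_right (norm_nonneg (P ^ 2 - P)) hA
  linarith

theorem circleIntegral_resolvent_eq_smul_add {P : A} {r R : ℝ} (hr : 0 < r) (hrR : r ≤ R)
    (hR : R < 1) (hρ : ∀ ξ : ℂ, r ≤ ‖ξ - 1‖ → ‖ξ - 1‖ ≤ R → ξ ∈ resolventSet ℂ P) :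
    ∮ ξ in C(1, r), resolvent P ξ =
      (2 * π * I : ℂ) • P + ∮ ξ in C(1, R), (resolvent P ξ - idempotentResolvent P ξ) := by
  have hnot : ∀ ξ : ℂ, r ≤ ‖ξ - 1‖ → ‖ξ - 1‖ ≤ R → ξ ≠ 0 ∧ ξ ≠ 1 := by
    intro ξ hlo hhi
    constructor <;> rintro rfl <;> norm_num at hlo hhi <;> linarith
  set F := fun ξ => resolvent P ξ - idempotentResolvent P ξ
  have hF : ∀ ξ : ℂ, r ≤ ‖ξ - 1‖ → ‖ξ - 1‖ ≤ R → DifferentiableAt ℂ F ξ := by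
    intro ξ hlo hhi
    obtain ⟨h0, h1⟩ := hnot ξ hlo hhi
    exact (hasDerivAt_resolvent_const_left (hρ ξ hlo hhi)).differentiableAt.sub
      (differentiableAt_idempotentResolvent P h0 h1)
  have hdeform : ∮ ξ in C(1, R), F ξ = ∮ ξ in C(1, r), F ξ := by
    refine circleIntegral_eq_of_differentiable_on_annulus_off_countable hr hrR
      Set.countable_empty (fun ξ hξ => ?_) (fun ξ hξ => ?_)
    · rw [Set.mem_sdiff, mem_closedBall_iff_norm, mem_ball_iff_norm, not_lt] at hξ
      exact (hF ξ hξ.2 hξ.1).continuousAt.continuousWithinAt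
    · rw [Set.sdiff_empty, Set.mem_sdiff, mem_ball_iff_norm, mem_closedBall_iff_norm,
        not_le] at hξ
      exact hF ξ hξ.2.le hξ.1.le
  have hsphere : ∀ ξ ∈ sphere (1 : ℂ) r, r ≤ ‖ξ - 1‖ ∧ ‖ξ - 1‖ ≤ R := fun ξ hξ => by
    rw [mem_sphere_iff_norm] at hξ
    exact ⟨hξ.ge, hξ.trans_le hrR⟩
  rw [hdeform, ← circleIntegral_idempotentResolvent P hr (hrR.trans_lt hR),
    ← circleIntegral.integral_add]
  · simp only [F, add_sub_cancel]
  · refine ContinuousOn.circleIntegrable hr.le fun ξ hξ => ?_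
    obtain ⟨h0, h1⟩ := hnot ξ (hsphere ξ hξ).1 (hsphere ξ hξ).2
    exact (differentiableAt_idempotentResolvent P h0 h1).continuousAt.continuousWithinAt
  · refine ContinuousOn.circleIntegrable hr.le fun ξ hξ => ?_
    exact (hF ξ (hsphere ξ hξ).1 (hsphere ξ hξ).2).continuousAt.continuousWithinAt

theorem norm_two_pi_I_inv_smul_circleIntegral_resolvent_sub_le (hA : ‖(1 : A)‖ ≤ 1) {P : A}
    {ε : ℝ} (hε0 : 0 < ε) (hε : ε < 1 / 4) (hP : ‖P ^ 2 - P‖ < ε) :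
    ‖(2 * π * I : ℂ)⁻¹ • (∮ ξ in C(1, 2 * ε), resolvent P ξ) - P‖ ≤
      4 * ε / (1 - 4 * ε) * (‖P‖ + ‖1 - P‖) := by
  have hρ : ∀ ξ : ℂ, 2 * ε ≤ ‖ξ - 1‖ → ‖ξ - 1‖ ≤ 1 / 2 → ξ ∈ resolventSet ℂ P :=
    fun ξ => mem_resolventSet_of_two_mul_le_norm_sub_one hA hP
  have hbound : ∀ ξ ∈ sphere (1 : ℂ) (1 / 2), ‖resolvent P ξ - idempotentResolvent P ξ‖ ≤
      8 * ε / (1 - 4 * ε) * (‖P‖ + ‖1 - P‖) := fun ξ hξ => by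
    rw [mem_sphere_iff_norm] at hξ
    exact norm_resolvent_sub_idempotentResolvent_le_of_norm_sub_one_eq_half hε hP.le
      (hρ ξ (by linarith) hξ.le) hξ
  have hnorm : ‖(2 * π * I : ℂ)⁻¹‖ = (2 * π)⁻¹ := by simp [abs_of_pos pi_pos]
  rw [circleIntegral_resolvent_eq_smul_add (by linarith) (by linarith) (by norm_num) hρ,
    smul_add, inv_smul_smul₀ two_pi_I_ne_zero, add_sub_cancel_left, norm_smul, hnorm]
  calc (2 * π)⁻¹ * ‖∮ ξ in C(1, 1 / 2), (resolvent P ξ - idempotentResolvent P ξ)‖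
      ≤ (2 * π)⁻¹ * (2 * π * (1 / 2) * (8 * ε / (1 - 4 * ε) * (‖P‖ + ‖1 - P‖))) := by
        gcongr
        exact circleIntegral.norm_integral_le_of_norm_le_const (by norm_num) hbound
    _ = 4 * ε / (1 - 4 * ε) * (‖P‖ + ‖1 - P‖) := by
        field_simp
        ring

end Normed

/-- Distance from a quasi-idempotent to its Riesz projection: if `‖P² − P‖ < ε` with
`0 < ε < 1/4`, and `Θ(P) = (2πi)⁻¹ ∮_{|ξ−1|=2ε} (ξ·I − P)⁻¹ dξ`, then
`‖Θ(P) − P‖ ≤ (4ε/(1 − 4ε))·(‖P‖ + ‖I − P‖ + 4ε)`. -/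
theorem stmt8 {H : Type*} [NormedAddCommGroup H] [InnerProductSpace ℂ H] [CompleteSpace H]
    (P : H →L[ℂ] H) (ε : ℝ) (hε0 : 0 < ε) (hε : ε < 1 / 4)
    (hP : ‖P ^ 2 - P‖ < ε) :
    ‖(2 * Real.pi * Complex.I : ℂ)⁻¹ •
        (∮ ξ in C(1, 2 * ε), Ring.inverse (ξ • (1 : H →L[ℂ] H) - P)) - P‖ ≤
      4 * ε / (1 - 4 * ε) * (‖P‖ + ‖(1 : H →L[ℂ] H) - P‖ + 4 * ε) := by
  have hres : ∀ ξ : ℂ, Ring.inverse (ξ • (1 : H →L[ℂ] H) - P) = resolvent P ξ := fun ξ => by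
    rw [resolvent, Algebra.algebraMap_eq_smul_one]
  simp only [hres]
  refine (norm_two_pi_I_inv_smul_circleIntegral_resolvent_sub_le
    ContinuousLinearMap.norm_id_le hε0 hε hP).trans ?_
  have : 0 < 4 * ε / (1 - 4 * ε) := div_pos (by linarith) (by linarith)
  nlinarith
end

section
/- Let ε > 0, r > 0, and let T be a real number with 0 < T < (1+ε)π/(2r). Let f : ℝ → ℝ be differentiable on [0, T] with f(0) = 0, and suppose that for every x ∈ [0, T] one has 0 ≤ (1+ε)·f'(x) ≤ f(x)² + r². Then f(x) ≤ r·tan(r x/(1+ε)) for every x ∈ [0, T]. -/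
/-!
For `s > 0` the Riccati solution `h_s x = s * tan (s * x / c)` satisfies `c * h_s' = h_s ^ 2 + s ^ 2`
and `h_s 0 = 0`. If `s > r`, then wherever `f` touches `h_s` we get
`c * f' ≤ f ^ 2 + r ^ 2 < f ^ 2 + s ^ 2 = c * h_s'`, so `f` cannot cross the barrier `h_s`;
letting `s ↓ r` gives the bound by `h_r`.
-/

open Real Set Filter Topology

lemma cos_div_pos {c s x : ℝ} (hc : 0 < c) (h0 : 0 ≤ s * x) (h : s * x < c * (π / 2)) :
    0 < cos (s * x / c) :=
  cos_pos_of_mem_Ioo ⟨by linarith [div_nonneg h0 hc.le, pi_pos], (div_lt_iff₀' hc).2 h⟩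

lemma hasDerivAt_mul_tan_div {c s x : ℝ} (hc : c ≠ 0) (hx : cos (s * x / c) ≠ 0) :
    HasDerivAt (fun y => s * tan (s * y / c)) (((s * tan (s * x / c)) ^ 2 + s ^ 2) / c) x := by
  have h := ((hasDerivAt_tan hx).comp x (((hasDerivAt_id x).const_mul s).div_const c)).const_mul s
  refine h.congr_deriv ?_
  rw [← inv_one_add_tan_sq hx]
  field_simp
  ring

section Riccati

variable {c r s T : ℝ} {f f' : ℝ → ℝ}

lemma le_mul_tan_of_riccati_lt (hc : 0 < c) (hs : 0 < s) (hsT : s * T < c * (π / 2))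
    (hf0 : f 0 ≤ 0) (hf : ContinuousOn f (Icc 0 T))
    (hf' : ∀ x ∈ Ico 0 T, HasDerivWithinAt f (f' x) (Ici x) x)
    (hbound : ∀ x ∈ Ico 0 T, c * f' x < f x ^ 2 + s ^ 2) :
    ∀ x ∈ Icc 0 T, f x ≤ s * tan (s * x / c) := by
  have hderiv : ∀ x ∈ Icc 0 T, HasDerivAt (fun y => s * tan (s * y / c))
      (((s * tan (s * x / c)) ^ 2 + s ^ 2) / c) x := fun x hx =>
    hasDerivAt_mul_tan_div hc.ne' (cos_div_pos hc (by nlinarith [hx.1])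
      (by nlinarith [hx.2])).ne'
  refine fun x hx => image_le_of_deriv_right_lt_deriv_boundary' hf hf' (by simpa using hf0)
    (fun y hy => (hderiv y hy).continuousAt.continuousWithinAt)
    (fun y hy => (hderiv y (Ico_subset_Icc_self hy)).hasDerivWithinAt) (fun y hy hfy => ?_) hx
  rw [← hfy, lt_div_iff₀' hc]
  exact hbound y hy

lemma le_mul_tan_of_riccati_le (hc : 0 < c) (hr : 0 < r) (hrT : r * T < c * (π / 2))
    (hf0 : f 0 ≤ 0) (hf : ContinuousOn f (Icc 0 T))
    (hf' : ∀ x ∈ Ico 0 T, HasDerivWithinAt f (f' x) (Ici x) x)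
    (hbound : ∀ x ∈ Ico 0 T, c * f' x ≤ f x ^ 2 + r ^ 2) :
    ∀ x ∈ Icc 0 T, f x ≤ r * tan (r * x / c) := by
  intro x hx
  have hlt : ∀ᶠ s in 𝓝[>] r, s * T < c * (π / 2) :=
    nhdsWithin_le_nhds ((continuous_id.mul continuous_const).continuousAt.eventually_lt
      continuousAt_const hrT)
  have hle : ∀ᶠ s in 𝓝[>] r, f x ≤ s * tan (s * x / c) := by
    filter_upwards [hlt, self_mem_nhdsWithin] with s hsT hrs
    refine le_mul_tan_of_riccati_lt hc (hr.trans hrs) hsT hf0 hf hf' (fun y hy => ?_) x hx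
    nlinarith [hbound y hy, mem_Ioi.1 hrs]
  have hcos : cos (r * x / c) ≠ 0 :=
    (cos_div_pos hc (by nlinarith [hx.1]) (by nlinarith [hx.2])).ne'
  have hcont : ContinuousAt (fun s => s * tan (s * x / c)) r :=
    continuousAt_id.mul ((continuousAt_tan.2 hcos).comp (f := fun s => s * x / c) (by fun_prop))
  exact ge_of_tendsto (hcont.tendsto.mono_left nhdsWithin_le_nhds) hle

end Riccati

theorem stmt13_general (ε r T : ℝ) (hε : 0 < ε) (hr : 0 < r)
    (hT : T < (1 + ε) * Real.pi / (2 * r))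
    (f f' : ℝ → ℝ) (hf0 : f 0 = 0)
    (hderiv : ∀ x ∈ Icc (0 : ℝ) T, HasDerivWithinAt f (f' x) (Icc (0 : ℝ) T) x)
    (hbound : ∀ x ∈ Icc (0 : ℝ) T,
      0 ≤ (1 + ε) * f' x ∧ (1 + ε) * f' x ≤ f x ^ 2 + r ^ 2) :
    ∀ x ∈ Icc (0 : ℝ) T, f x ≤ r * Real.tan (r * x / (1 + ε)) := by
  have hc : 0 < 1 + ε := by linarith
  have hrT : r * T < (1 + ε) * (π / 2) := by
    rw [lt_div_iff₀ (by positivity)] at hT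
    linarith
  exact le_mul_tan_of_riccati_le hc hr hrT hf0.le
    (fun x hx => (hderiv x hx).continuousWithinAt)
    (fun x hx => (hderiv x (Ico_subset_Icc_self hx)).mono_of_mem_nhdsWithin
      (Icc_mem_nhdsGE_of_mem hx))
    (fun x hx => (hbound x (Ico_subset_Icc_self hx)).2)

/-- ODE comparison: if `0 < T < (1+ε)π/(2r)`, `f(0) = 0`, `f` is differentiable on
`[0, T]` with derivative `f'` satisfying `0 ≤ (1+ε)·f'(x) ≤ f(x)² + r²` there, then
`f(x) ≤ r·tan(r x/(1+ε))` on `[0, T]`. -/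
theorem stmt13 (ε r T : ℝ) (hε : 0 < ε) (hr : 0 < r)
    (hT0 : 0 < T) (hT : T < (1 + ε) * Real.pi / (2 * r))
    (f f' : ℝ → ℝ) (hf0 : f 0 = 0)
    (hderiv : ∀ x ∈ Icc (0 : ℝ) T, HasDerivWithinAt f (f' x) (Icc (0 : ℝ) T) x)
    (hbound : ∀ x ∈ Icc (0 : ℝ) T,
      0 ≤ (1 + ε) * f' x ∧ (1 + ε) * f' x ≤ f x ^ 2 + r ^ 2) :
    ∀ x ∈ Icc (0 : ℝ) T, f x ≤ r * Real.tan (r * x / (1 + ε)) :=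
  stmt13_general ε r T hε hr hT f f' hf0 hderiv hbound
end
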